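/- arXiv:math/0606363 — 4 statements merged into one kernel-verified Lean document; each statement's English description precedes it below -/
import Mathlib

section
/- Let K be a field equipped with a multiplicative nonarchimedean norm ‖·‖ (so ‖xy‖ = ‖x‖·‖y‖ and ‖x+y‖ ≤ max(‖x‖,‖y‖)). Let n be a positive integer, let M be an n×n matrix over K, and let u₀ > u₁ > ⋯ > u_{n−1} > 0 be a strictly decreasing sequence of positive real numbers. Suppose that: (a) for every m with 1 ≤ m ≤ n, the determinant of the top-left m×m submatrix of M (rows and columns indexed by 0,…,m−1) has norm exactly ∏_{j=0}^{m−1} u_j; and (b) every entry of M in column j has norm at most u_j. Then, writing det(1 − t·M) = Σ_{m=0}^{n} c_m t^m as a polynomial in t over K, one has ‖c_m‖ = ∏_{j=0}^{m−1} u_j for every m with 0 ≤ m ≤ n. -/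
open Polynomial Matrix

open Finset Equiv

lemma coeff_det_expand {K : Type*} [CommRing K] {n : ℕ}
    (M : Matrix (Fin n) (Fin n) K) (m : ℕ) :
    (((1 : Matrix (Fin n) (Fin n) (Polynomial K)) - (X : Polynomial K) • M.map C).det).coeff m
      = ∑ t ∈ Finset.univ.powersetCard m,
          ∑ σ ∈ Finset.univ.filter (fun σ : Equiv.Perm (Fin n) => ∀ i ∉ t, σ i = i),
            ((Equiv.Perm.sign σ : ℤ) : K) * ((-1 : K) ^ m * ∏ i ∈ t, M (σ i) i) := by
  classical
  rw [Matrix.det_apply', Polynomial.finset_sum_coeff]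
  have hentry : ∀ (σ : Equiv.Perm (Fin n)) (i : Fin n),
      ((1 : Matrix (Fin n) (Fin n) (Polynomial K)) - (X : Polynomial K) • M.map C) (σ i) i
        = (-(C (M (σ i) i) * X)) + (if σ i = i then 1 else 0) := by
    intro σ i
    rw [Matrix.sub_apply, Matrix.smul_apply, Matrix.map_apply, Matrix.one_apply, smul_eq_mul]
    by_cases h : σ i = i <;> simp only [if_pos, if_neg, h, if_true, if_false] <;> ring
  have hmain : ∀ σ : Equiv.Perm (Fin n),
      ((((Equiv.Perm.sign σ : ℤ) : Polynomial K) *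
        ∏ i, ((1 : Matrix (Fin n) (Fin n) (Polynomial K)) - (X : Polynomial K) • M.map C) (σ i) i).coeff m)
      = ∑ t : Finset (Fin n),
          (if (t.card = m ∧ ∀ i ∉ t, σ i = i) then
            ((Equiv.Perm.sign σ : ℤ) : K) * ((-1 : K) ^ m * ∏ i ∈ t, M (σ i) i) else 0) := by
    intro σ
    simp only [hentry]
    rw [Fintype.prod_add]
    rw [Finset.mul_sum, Polynomial.finset_sum_coeff]
    refine Finset.sum_congr rfl ?_
    intro t _
    have h1 : (∏ i ∈ t, (-(C (M (σ i) i) * X))) = C ((-1 : K) ^ t.card * ∏ i ∈ t, M (σ i) i) * X ^ t.card := by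
      calc (∏ i ∈ t, (-(C (M (σ i) i) * X)))
          = ∏ i ∈ t, (C (-M (σ i) i) * X) := by
            refine Finset.prod_congr rfl fun i _ => ?_
            rw [map_neg, neg_mul]
        _ = (∏ i ∈ t, C (-M (σ i) i)) * X ^ t.card := by
            rw [Finset.prod_mul_distrib, Finset.prod_const]
        _ = C ((-1 : K) ^ t.card * ∏ i ∈ t, M (σ i) i) * X ^ t.card := by
            rw [← map_prod]
            congr 1
            rw [show ((-1 : K) ^ t.card * ∏ i ∈ t, M (σ i) i)
                = ∏ i ∈ t, ((-1) * M (σ i) i) by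
              rw [Finset.prod_mul_distrib, Finset.prod_const]]
            exact congrArg C (Finset.prod_congr rfl fun i _ => by ring)
    have h2 : (∏ i ∈ tᶜ, (if σ i = i then (1 : Polynomial K) else 0))
        = if (∀ i ∉ t, σ i = i) then 1 else 0 := by
      rw [Finset.prod_boole]
      simp [Finset.mem_compl]
    rw [h1, h2]
    by_cases hQ : ∀ i ∉ t, σ i = i
    · rw [if_pos hQ, mul_one]
      rw [show (((Equiv.Perm.sign σ : ℤ) : Polynomial K)) = C (((Equiv.Perm.sign σ : ℤ) : K)) by
        simp]
      rw [← mul_assoc, ← _root_.map_mul, Polynomial.coeff_C_mul, Polynomial.coeff_X_pow]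
      by_cases hc : t.card = m
      · subst hc
        simp only [and_true, eq_self_iff_true, if_true, mul_one, mul_assoc]
        rw [if_pos (show True ∧ ∀ i ∉ t, σ i = i from ⟨trivial, hQ⟩)]
      · rw [if_neg (fun h : m = t.card => hc h.symm), mul_zero,
            if_neg (fun h : t.card = m ∧ ∀ i ∉ t, σ i = i => hc h.1)]
    · rw [if_neg hQ, mul_zero, mul_zero, Polynomial.coeff_zero,
        if_neg (fun h : _ ∧ ∀ i ∉ t, σ i = i => hQ h.2)]
  calc ∑ σ : Equiv.Perm (Fin n),
        ((((Equiv.Perm.sign σ : ℤ) : Polynomial K) *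
          ∏ i, ((1 : Matrix (Fin n) (Fin n) (Polynomial K)) - (X : Polynomial K) • M.map C) (σ i) i).coeff m)
      = ∑ σ : Equiv.Perm (Fin n), ∑ t : Finset (Fin n),
          (if (t.card = m ∧ ∀ i ∉ t, σ i = i) then
            ((Equiv.Perm.sign σ : ℤ) : K) * ((-1 : K) ^ m * ∏ i ∈ t, M (σ i) i) else 0) :=
        Finset.sum_congr rfl fun σ _ => hmain σ
    _ = ∑ t : Finset (Fin n), ∑ σ : Equiv.Perm (Fin n),
          (if (t.card = m ∧ ∀ i ∉ t, σ i = i) then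
            ((Equiv.Perm.sign σ : ℤ) : K) * ((-1 : K) ^ m * ∏ i ∈ t, M (σ i) i) else 0) :=
        Finset.sum_comm
    _ = ∑ t ∈ Finset.univ.powersetCard m,
          ∑ σ ∈ Finset.univ.filter (fun σ : Equiv.Perm (Fin n) => ∀ i ∉ t, σ i = i),
            ((Equiv.Perm.sign σ : ℤ) : K) * ((-1 : K) ^ m * ∏ i ∈ t, M (σ i) i) := ?_
  rw [show (Finset.univ.powersetCard m : Finset (Finset (Fin n)))
      = Finset.univ.filter (fun t : Finset (Fin n) => t.card = m) by
    rw [Finset.powersetCard_eq_filter, Finset.powerset_univ]]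
  rw [Finset.sum_filter]
  refine Finset.sum_congr rfl fun t _ => ?_
  rw [Finset.sum_filter]
  by_cases hc : t.card = m
  · rw [if_pos hc]
    refine Finset.sum_congr rfl fun σ _ => ?_
    by_cases hQ : ∀ i ∉ t, σ i = i
    · rw [if_pos ⟨hc, hQ⟩, if_pos hQ]
    · rw [if_neg (fun h : _ ∧ _ => hQ h.2), if_neg hQ]
  · rw [if_neg hc]
    refine Finset.sum_eq_zero fun σ _ => if_neg (fun h : _ ∧ _ => hc h.1)

lemma sum_perm_eq_det {K : Type*} [CommRing K] {n m : ℕ} (hm : m ≤ n)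
    (M : Matrix (Fin n) (Fin n) K) :
    ∑ σ ∈ Finset.univ.filter
        (fun σ : Equiv.Perm (Fin n) =>
          ∀ i ∉ (Finset.univ.map (Fin.castLEEmb hm) : Finset (Fin n)), σ i = i),
      ((Equiv.Perm.sign σ : ℤ) : K) *
        ∏ i ∈ (Finset.univ.map (Fin.castLEEmb hm) : Finset (Fin n)), M (σ i) i
    = (M.submatrix (Fin.castLE hm) (Fin.castLE hm)).det := by
  classical
  set t₀ : Finset (Fin n) := Finset.univ.map (Fin.castLEEmb hm) with ht₀
  have hmem : ∀ i : Fin n, i ∈ t₀ ↔ (i : ℕ) < m := by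
    intro i
    simp only [ht₀, Finset.mem_map, Finset.mem_univ, true_and, Fin.coe_castLEEmb]
    constructor
    · rintro ⟨k, rfl⟩; exact k.isLt
    · intro h; exact ⟨⟨(i : ℕ), h⟩, by ext; rfl⟩
  let e : Fin m ≃ {i : Fin n // (i : ℕ) < m} :=
    { toFun := fun k => ⟨Fin.castLE hm k, k.isLt⟩
      invFun := fun j => ⟨(j.1 : ℕ), j.2⟩
      left_inv := fun k => rfl
      right_inv := fun j => rfl }
  have hext : ∀ (τ : Equiv.Perm (Fin m)) (k : Fin m),
      (τ.extendDomain e) (Fin.castLE hm k) = Fin.castLE hm (τ k) := by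
    intro τ k
    have h1 : ((Fin.castLE hm k : Fin n) : ℕ) < m := k.isLt
    rw [Equiv.Perm.extendDomain_apply_subtype _ e h1]
    have h2 : e.symm ⟨Fin.castLE hm k, h1⟩ = k := rfl
    rw [h2]
    rfl
  rw [Matrix.det_apply']
  refine (Finset.sum_bij (fun (τ : Equiv.Perm (Fin m)) _ => τ.extendDomain e)
    ?_ ?_ ?_ ?_).symm
  · intro τ _
    simp only [Finset.mem_filter, Finset.mem_univ, true_and]
    intro i hi
    exact Equiv.Perm.extendDomain_apply_not_subtype _ e (fun h => hi ((hmem i).2 h))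
  · intro τ₁ _ τ₂ _ h
    ext k
    have := congrArg (fun σ : Equiv.Perm (Fin n) => σ (Fin.castLE hm k)) h
    simp only [hext] at this
    have : (Fin.castLE hm (τ₁ k) : ℕ) = (Fin.castLE hm (τ₂ k) : ℕ) := congrArg Fin.val this
    exact this
  · intro σ hσ
    simp only [Finset.mem_filter, Finset.mem_univ, true_and] at hσ
    have hp : ∀ i : Fin n, (i : ℕ) < m ↔ ((σ i : Fin n) : ℕ) < m := by
      intro i
      constructor
      · intro hi
        by_contra hni
        have h1 : σ i ∉ t₀ := fun h => hni ((hmem _).1 h)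
        have h2 : σ (σ i) = σ i := hσ _ h1
        have h3 : σ i = i := σ.injective h2
        rw [h3] at hni; exact hni hi
      · intro hi
        by_contra hni
        have h1 : i ∉ t₀ := fun h => hni ((hmem _).1 h)
        have h2 : σ i = i := hσ _ h1
        rw [h2] at hi; exact hni hi
    refine ⟨Equiv.permCongr e.symm (σ.subtypePerm (fun i => (hp i).symm)), Finset.mem_univ _, ?_⟩
    ext i
    by_cases hi : (i : ℕ) < m
    · rw [Equiv.Perm.extendDomain_apply_subtype _ e hi]
      have h2 : e.symm ⟨i, hi⟩ = ⟨(i : ℕ), hi⟩ := rfl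
      simp only [Equiv.permCongr_apply, Equiv.symm_symm, h2]
      have h3 : e ⟨(i : ℕ), hi⟩ = ⟨i, hi⟩ := by
        apply Subtype.ext; ext; rfl
      rw [h3]
      rfl
    · rw [Equiv.Perm.extendDomain_apply_not_subtype _ e hi]
      exact congrArg Fin.val (hσ i (fun h => hi ((hmem i).1 h))).symm
  · intro τ _
    rw [Equiv.Perm.sign_extendDomain]
    congr 1
    rw [ht₀, Finset.prod_map]
    refine Finset.prod_congr rfl fun k _ => ?_
    rw [Fin.coe_castLEEmb]  -- coe emb
    rw [hext]
    rfl

lemma prod_subset_lt {n m : ℕ} (hm : m ≤ n) (u : ℕ → ℝ)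
    (hu_pos : ∀ j, j < n → 0 < u j)
    (hu_anti : ∀ i j, i < j → j < n → u j < u i)
    (t : Finset (Fin n)) (ht : t.card = m)
    (hne : t ≠ Finset.univ.map (Fin.castLEEmb hm)) :
    ∏ i ∈ t, u (i : ℕ) < ∏ j ∈ Finset.range m, u j := by
  classical
  set g := t.orderEmbOfFin ht with hg
  have himg : Finset.univ.map g.toEmbedding = t := by
    apply Finset.coe_injective
    rw [Finset.coe_map, Finset.coe_univ, Set.image_univ]
    exact t.range_orderEmbOfFin ht
  have hle : ∀ N : ℕ, ∀ k : Fin m, (k : ℕ) = N → N ≤ (g k : ℕ) := by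
    intro N
    induction N with
    | zero => intro k _; exact Nat.zero_le _
    | succ j ih =>
      intro k hk
      have hj : j < m := by omega
      have h1 : j ≤ (g ⟨j, hj⟩ : ℕ) := ih ⟨j, hj⟩ rfl
      have hlt : (⟨j, hj⟩ : Fin m) < k := by
        rw [Fin.lt_def]; simp; omega
      have h2 : (g ⟨j, hj⟩ : ℕ) < (g k : ℕ) := g.strictMono hlt
      omega
  have hle' : ∀ k : Fin m, (k : ℕ) ≤ (g k : ℕ) := fun k => hle (k : ℕ) k rfl
  have hex : ∃ k : Fin m, (k : ℕ) < (g k : ℕ) := by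
    by_contra hcon
    push_neg at hcon
    have hgk : ∀ k : Fin m, ((g k) : ℕ) = (k : ℕ) := fun k => le_antisymm (hcon k) (hle' k)
    apply hne
    rw [← himg]
    ext i
    simp only [Finset.mem_map, Finset.mem_univ, true_and]
    constructor
    · rintro ⟨k, rfl⟩
      exact ⟨k, by ext; exact (hgk k).symm⟩
    · rintro ⟨k, rfl⟩
      exact ⟨k, by ext; exact hgk k⟩
  rw [← himg, Finset.prod_map, ← Fin.prod_univ_eq_prod_range]
  refine Finset.prod_lt_prod (fun k _ => hu_pos _ (g k).isLt) (fun k _ => ?_) ?_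
  · rcases lt_or_eq_of_le (hle' k) with h | h
    · exact (hu_anti _ _ h (g k).isLt).le
    · exact le_of_eq (congrArg u h.symm)
  · obtain ⟨k, hk⟩ := hex
    exact ⟨k, Finset.mem_univ k, hu_anti _ _ hk (g k).isLt⟩

lemma f_sum_lt {K : Type*} [Field K] (f : K → ℝ) (hf0 : f 0 = 0)
    (hf_add : ∀ x y, f (x + y) ≤ max (f x) (f y))
    {ι : Type*} (g : ι → K) (B : ℝ) (hB : 0 < B) :
    ∀ s : Finset ι, (∀ i ∈ s, f (g i) < B) → f (∑ i ∈ s, g i) < B := by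
  intro s
  induction s using Finset.cons_induction with
  | empty => intro _; simpa [hf0]
  | cons a s ha ih =>
    intro h
    rw [Finset.sum_cons]
    refine lt_of_le_of_lt (hf_add _ _) (max_lt (h a (Finset.mem_cons_self a s))
      (ih fun i hi => h i (Finset.mem_cons.2 (Or.inr hi))))

/-- Serre's lemma: if the leading principal minors of an `n × n` matrix `M` over a
nonarchimedean normed field have exact norms `∏_{j<m} u j` for a strictly decreasing
sequence of positive reals `u`, and each entry in column `j` has norm at most `u j`,
then the coefficients `c_m` of the reverse characteristic polynomial
`det (1 - t M) = Σ c_m t^m` satisfy `‖c_m‖ = ∏_{j<m} u j`. -/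
theorem serre_minors_determine_coeff_norms
    (K : Type*) [Field K] (f : K → ℝ)
    (hf_nonneg : ∀ x, 0 ≤ f x)
    (hf_eq_zero : ∀ x, f x = 0 ↔ x = 0)
    (hf_mul : ∀ x y, f (x * y) = f x * f y)
    (hf_add : ∀ x y, f (x + y) ≤ max (f x) (f y))
    (n : ℕ) (hn : 0 < n)
    (M : Matrix (Fin n) (Fin n) K)
    (u : ℕ → ℝ)
    (hu_pos : ∀ j, j < n → 0 < u j)
    (hu_anti : ∀ i j, i < j → j < n → u j < u i)
    (ha : ∀ (m : ℕ) (hm : m ≤ n), 1 ≤ m →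
      f ((M.submatrix (Fin.castLE hm) (Fin.castLE hm)).det)
        = ∏ j ∈ Finset.range m, u j)
    (hb : ∀ i j : Fin n, f (M i j) ≤ u (j : ℕ)) :
    ∀ m : ℕ, m ≤ n →
      f ((((1 : Matrix (Fin n) (Fin n) (Polynomial K))
            - (X : Polynomial K) • M.map C).det).coeff m)
        = ∏ j ∈ Finset.range m, u j := by
  intro m hm
  classical
  -- basic facts about f
  have hf0 : f 0 = 0 := (hf_eq_zero 0).2 rfl
  have hf1 : f 1 = 1 := by
    have h := hf_mul 1 1
    rw [one_mul] at h
    have h1 : f 1 ≠ 0 := fun h0 => one_ne_zero ((hf_eq_zero 1).1 h0)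
    have h2 : f 1 * 1 = f 1 * f 1 := by rw [mul_one]; exact h
    exact (mul_left_cancel₀ h1 h2).symm
  have hfneg1 : f (-1) = 1 := by
    have h : f (-1) * f (-1) = 1 := by
      rw [← hf_mul]; norm_num; exact hf1
    have h2 : (f (-1) - 1) * (f (-1) + 1) = 0 := by nlinarith
    rcases mul_eq_zero.1 h2 with h3 | h3
    · linarith
    · nlinarith [hf_nonneg (-1)]
  have hfneg : ∀ x, f (-x) = f x := by
    intro x
    have : (-x) = (-1) * x := by ring
    rw [this, hf_mul, hfneg1, one_mul]
  have hfpow : ∀ (x : K) (k : ℕ), f (x ^ k) = f x ^ k := by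
    intro x k
    induction k with
    | zero => simpa using hf1
    | succ j ih => rw [pow_succ, pow_succ, hf_mul, ih]
  have hfprod : ∀ {ι : Type} (s : Finset ι) (g : ι → K),
      f (∏ i ∈ s, g i) = ∏ i ∈ s, f (g i) := by
    intro ι s g
    induction s using Finset.cons_induction with
    | empty => simpa using hf1
    | cons a s ha ih => rw [Finset.prod_cons, Finset.prod_cons, hf_mul, ih]
  have hfsign : ∀ σ : Equiv.Perm (Fin n), f (((Equiv.Perm.sign σ : ℤ) : K)) = 1 := by
    intro σ
    rcases Int.units_eq_one_or (Equiv.Perm.sign σ) with h | h <;> rw [h]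
    · simpa using hf1
    · simpa using hfneg1
  have hfdom : ∀ a b : K, f b < f a → f (a + b) = f a := by
    intro a b h
    refine le_antisymm (le_trans (hf_add a b) (max_le le_rfl h.le)) ?_
    have h2 := hf_add (a + b) (-b)
    rw [add_neg_cancel_right, hfneg] at h2
    rcases le_max_iff.1 h2 with h3 | h3
    · exact h3
    · linarith
  -- setup
  set t₀ : Finset (Fin n) := Finset.univ.map (Fin.castLEEmb hm) with ht₀def
  have ht₀card : t₀.card = m := by simp [ht₀def]
  have ht₀mem : t₀ ∈ Finset.univ.powersetCard m :=
    Finset.mem_powersetCard_univ.2 ht₀card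
  set P : ℝ := ∏ j ∈ Finset.range m, u j with hPdef
  have hPpos : 0 < P :=
    Finset.prod_pos fun j hj => hu_pos j (lt_of_lt_of_le (Finset.mem_range.1 hj) hm)
  set v : Finset (Fin n) → K := fun t =>
    ∑ σ ∈ Finset.univ.filter (fun σ : Equiv.Perm (Fin n) => ∀ i ∉ t, σ i = i),
      ((Equiv.Perm.sign σ : ℤ) : K) * ((-1 : K) ^ m * ∏ i ∈ t, M (σ i) i) with hvdef
  -- value at t₀
  have hv0 : f (v t₀) = P := by
    have h1 : v t₀ = (-1 : K) ^ m *
        ∑ σ ∈ Finset.univ.filter (fun σ : Equiv.Perm (Fin n) => ∀ i ∉ t₀, σ i = i),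
          ((Equiv.Perm.sign σ : ℤ) : K) * ∏ i ∈ t₀, M (σ i) i := by
      rw [hvdef, Finset.mul_sum]
      exact Finset.sum_congr rfl fun σ _ => by ring
    rw [h1, hf_mul, hfpow, hfneg1, one_pow, one_mul, ht₀def, sum_perm_eq_det hm M]
    rcases Nat.eq_zero_or_pos m with h | h
    · subst h
      have : (M.submatrix (Fin.castLE hm) (Fin.castLE hm)).det = 1 :=
        Matrix.det_isEmpty
      rw [this, hf1, hPdef]
      simp
    · rw [ha m hm h, hPdef]
  -- strict bound elsewhere
  have hvlt : ∀ t ∈ Finset.univ.powersetCard m, t ≠ t₀ → f (v t) < P := by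
    intro t htc htne
    have hcard : t.card = m := Finset.mem_powersetCard_univ.1 htc
    refine f_sum_lt f hf0 hf_add _ P hPpos _ ?_
    intro σ _
    have h1 : f (((Equiv.Perm.sign σ : ℤ) : K) * ((-1 : K) ^ m * ∏ i ∈ t, M (σ i) i))
        = ∏ i ∈ t, f (M (σ i) i) := by
      rw [hf_mul, hf_mul, hfsign, hfpow, hfneg1, one_pow, one_mul, one_mul, hfprod]
    rw [h1]
    have h2 : ∏ i ∈ t, f (M (σ i) i) ≤ ∏ i ∈ t, u (i : ℕ) :=
      Finset.prod_le_prod (fun i _ => hf_nonneg _) (fun i _ => hb (σ i) i)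
    exact lt_of_le_of_lt h2 (prod_subset_lt hm u hu_pos hu_anti t hcard htne)
  -- assemble
  rw [coeff_det_expand]
  rw [← Finset.add_sum_erase _ _ ht₀mem]
  have herase : f (∑ t ∈ (Finset.univ.powersetCard m).erase t₀, v t) < P := by
    refine f_sum_lt f hf0 hf_add _ P hPpos _ ?_
    intro t ht
    exact hvlt t (Finset.mem_of_mem_erase ht) (Finset.ne_of_mem_erase ht)
  rw [hfdom _ _ (by rw [hv0]; exact herase)]
  exact hv0
end

section
/- Let K be a field equipped with a multiplicative nonarchimedean norm ‖·‖ such that ‖5‖ = 1/5 (for instance, a finite extension of ℚ₅ with its extended absolute value). Let x ∈ K satisfy ‖x‖ > 5^{−1/2}. Then x⁴ + 5x³ + 15x² + 25x + 25 ≠ 0; moreover, setting y := x⁵/(x⁴ + 5x³ + 15x² + 25x + 25), one has ‖y‖ = ‖x‖; in particular y ≠ 0, the element y² + 250y + 3125 is nonzero with ‖y² + 250y + 3125‖ = ‖y‖², and J := (y² + 250y + 3125)³/y⁵ satisfies ‖J‖ = ‖x‖. -/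
/-- Newton-polygon computation on the Hauptmodul relations: over a field with a
multiplicative nonarchimedean norm with `‖5‖ = 1/5`, if `‖x‖ > 5^{-1/2}` then
`x⁴ + 5x³ + 15x² + 25x + 25 ≠ 0`, the element `y := x⁵/(x⁴+5x³+15x²+25x+25)` has
`‖y‖ = ‖x‖` (in particular `y ≠ 0`), `y² + 250y + 3125` is nonzero with norm `‖y‖²`,
and `J := (y² + 250y + 3125)³ / y⁵` satisfies `‖J‖ = ‖x‖`. -/
theorem hauptmodul_valuation_comparison
    (K : Type*) [Field K] (f : K → ℝ)
    (hf_nonneg : ∀ x, 0 ≤ f x)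
    (hf_eq_zero : ∀ x, f x = 0 ↔ x = 0)
    (hf_mul : ∀ x y, f (x * y) = f x * f y)
    (hf_add : ∀ x y, f (x + y) ≤ max (f x) (f y))
    (hf_five : f 5 = 1 / 5)
    (x : K) (hx : (Real.sqrt 5)⁻¹ < f x) :
    x ^ 4 + 5 * x ^ 3 + 15 * x ^ 2 + 25 * x + 25 ≠ 0 ∧
    ∀ y : K, y = x ^ 5 / (x ^ 4 + 5 * x ^ 3 + 15 * x ^ 2 + 25 * x + 25) →
      f y = f x ∧ y ≠ 0 ∧
      y ^ 2 + 250 * y + 3125 ≠ 0 ∧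
      f (y ^ 2 + 250 * y + 3125) = (f y) ^ 2 ∧
      f ((y ^ 2 + 250 * y + 3125) ^ 3 / y ^ 5) = f x := by
  have hf1 : f 1 = 1 := by
    have h := hf_mul 1 1
    rw [mul_one] at h
    have h0 : f 1 ≠ 0 := fun h' => one_ne_zero ((hf_eq_zero 1).mp h')
    have h2 : f 1 * (f 1 - 1) = 0 := by linear_combination -h
    rcases mul_eq_zero.mp h2 with h3 | h3
    · exact absurd h3 h0
    · linarith
  have hm1 : f (-1) = 1 := by
    have h := hf_mul (-1) (-1)
    rw [neg_mul_neg, one_mul, hf1] at h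
    have h0 := hf_nonneg (-1)
    have h2 : (f (-1) - 1) * (f (-1) + 1) = 0 := by linear_combination -h
    rcases mul_eq_zero.mp h2 with h3 | h3
    · linarith
    · linarith
  have hneg : ∀ a : K, f (-a) = f a := by
    intro a
    rw [← neg_one_mul, hf_mul, hm1, one_mul]
  have hadd' : ∀ a b : K, f b < f a → f (a + b) = f a := by
    intro a b h
    have h1 : f (a + b) ≤ f a := (hf_add a b).trans (max_le le_rfl h.le)
    have h2 : f a ≤ max (f (a + b)) (f b) := by
      have h3 := hf_add (a + b) (-b)
      rw [add_neg_cancel_right, hneg] at h3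
      exact h3
    rcases le_max_iff.mp h2 with h3 | h3
    · exact le_antisymm h1 h3
    · exact absurd h3 (not_le.mpr h)
  have hpow : ∀ (a : K) (n : ℕ), f (a ^ n) = f a ^ n := by
    intro a n
    induction n with
    | zero => simpa using hf1
    | succ n ih => rw [pow_succ, hf_mul, ih, pow_succ]
  have hdiv : ∀ a b : K, b ≠ 0 → f (a / b) = f a / f b := by
    intro a b hb
    have hb' : f b ≠ 0 := fun h => hb ((hf_eq_zero b).mp h)
    rw [eq_div_iff hb', ← hf_mul, div_mul_cancel₀ a hb]
  have h2le : f 2 ≤ 1 := by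
    have h := hf_add 1 1
    rw [show (1:K) + 1 = 2 by norm_num, hf1, max_self] at h
    exact h
  have h3le : f 3 ≤ 1 := by
    have h := hf_add 2 1
    rw [show (2:K) + 1 = 3 by norm_num, hf1] at h
    exact h.trans (max_le h2le le_rfl)
  have f25 : f 25 = 1 / 25 := by
    rw [show (25:K) = 5 * 5 by norm_num, hf_mul, hf_five]; norm_num
  have f15le : f 15 ≤ 1 / 5 := by
    rw [show (15:K) = 3 * 5 by norm_num, hf_mul, hf_five]
    nlinarith [hf_nonneg 3]
  have f250le : f 250 ≤ 1 / 125 := by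
    rw [show (250:K) = 2 * (5 * (5 * 5)) by norm_num, hf_mul, hf_mul, hf_mul, hf_five]
    nlinarith [hf_nonneg 2]
  have f3125 : f 3125 = 1 / 3125 := by
    rw [show (3125:K) = 5 * (5 * (5 * (5 * 5))) by norm_num, hf_mul, hf_mul, hf_mul,
      hf_mul, hf_five]
    norm_num
  -- real estimates
  have hs5 : 0 < Real.sqrt 5 := Real.sqrt_pos.mpr (by norm_num)
  have hsq : Real.sqrt 5 ^ 2 = 5 := Real.sq_sqrt (by norm_num)
  have hu0 : 0 < f x := lt_trans (inv_pos.mpr hs5) hx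
  have hu2 : 5⁻¹ < f x ^ 2 := by
    have h := pow_lt_pow_left₀ hx (inv_nonneg.mpr hs5.le) two_ne_zero
    rwa [inv_pow, hsq] at h
  have hs5' : Real.sqrt 5 < 5 := by nlinarith
  have hu15 : (5:ℝ)⁻¹ < f x := by
    have h : (5:ℝ)⁻¹ < (Real.sqrt 5)⁻¹ := by
      apply inv_strictAnti₀ hs5 hs5'
    exact h.trans hx
  -- term estimates for the denominator
  have i1 : f (5 * x ^ 3) < f (x ^ 4) := by
    rw [hf_mul, hf_five, hpow, hpow]
    nlinarith [pow_pos hu0 3, hu15]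
  have i2 : f (15 * x ^ 2) < f (x ^ 4) := by
    rw [hf_mul, hpow, hpow]
    nlinarith [pow_pos hu0 2, mul_le_mul_of_nonneg_right f15le (pow_nonneg hu0.le 2), hu2]
  have i3 : f (25 * x) < f (x ^ 4) := by
    rw [hf_mul, f25, hpow]
    nlinarith [hu0, hu15, hu2, mul_pos (sub_pos.mpr hu15) (sub_pos.mpr hu2)]
  have i4 : f 25 < f (x ^ 4) := by
    rw [f25, hpow]
    nlinarith [hu2]
  have hd1 := hadd' (x ^ 4) (5 * x ^ 3) i1
  have hd2 := hadd' (x ^ 4 + 5 * x ^ 3) (15 * x ^ 2) (by rw [hd1]; exact i2)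
  have hd3 := hadd' (x ^ 4 + 5 * x ^ 3 + 15 * x ^ 2) (25 * x) (by rw [hd2, hd1]; exact i3)
  have hd4 := hadd' (x ^ 4 + 5 * x ^ 3 + 15 * x ^ 2 + 25 * x) 25 (by rw [hd3, hd2, hd1]; exact i4)
  have hD : f (x ^ 4 + 5 * x ^ 3 + 15 * x ^ 2 + 25 * x + 25) = f x ^ 4 := by
    rw [hd4, hd3, hd2, hd1, hpow]
  have hDne : x ^ 4 + 5 * x ^ 3 + 15 * x ^ 2 + 25 * x + 25 ≠ 0 := by
    intro h
    have := (hf_eq_zero _).mpr h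
    rw [hD] at this
    exact (pow_ne_zero 4 hu0.ne') this
  refine ⟨hDne, ?_⟩
  intro y hy
  have hfy : f y = f x := by
    rw [hy, hdiv _ _ hDne, hpow, hD, div_eq_iff (pow_ne_zero 4 hu0.ne')]
    ring
  have hyne : y ≠ 0 := by
    intro h
    rw [h, (hf_eq_zero 0).mpr rfl] at hfy
    exact hu0.ne hfy
  have j1 : f (250 * y) < f (y ^ 2) := by
    rw [hf_mul, hpow, hfy]
    calc f 250 * f x ≤ 1 / 125 * f x := mul_le_mul_of_nonneg_right f250le hu0.le
      _ < 5⁻¹ * f x := by nlinarith [hu0]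
      _ < f x * f x := mul_lt_mul_of_pos_right hu15 hu0
      _ = f x ^ 2 := (sq (f x)).symm
  have j2 : f 3125 < f (y ^ 2) := by
    rw [hpow, hfy, f3125]
    linarith [hu2]
  have he1 := hadd' (y ^ 2) (250 * y) j1
  have he2 := hadd' (y ^ 2 + 250 * y) 3125 (by rw [he1]; exact j2)
  have hE : f (y ^ 2 + 250 * y + 3125) = f x ^ 2 := by
    rw [he2, he1, hpow, hfy]
  have hEne : y ^ 2 + 250 * y + 3125 ≠ 0 := by
    intro h
    have := (hf_eq_zero _).mpr h
    rw [hE] at this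
    exact (pow_ne_zero 2 hu0.ne') this
  refine ⟨hfy, hyne, hEne, by rw [hE, hfy], ?_⟩
  rw [hdiv _ _ (pow_ne_zero 5 hyne), hpow, hpow, hE, hfy,
    div_eq_iff (pow_ne_zero 5 hu0.ne')]
  ring
end

section
/- Let T ∈ ℤ[[q]] be the formal power series T := q · ∏_{n=1}^{∞}(1 − q^{25n}) · (∏_{n=1}^{∞}(1 − qⁿ))^{−1}, where the infinite products are taken in the ring ℤ[[q]] of formal power series over ℤ (they converge coefficientwise, since each coefficient is determined by finitely many factors), and the inverse exists because ∏(1−qⁿ) has constant term 1. Let V : ℤ[[q]] → ℤ[[q]] be the substitution q ↦ q⁵, i.e. V(Σ aₙqⁿ) = Σ aₙ q^{5n}. Then T⁵ ≡ V(T) (mod 5), i.e. every coefficient of the power series T⁵ − V(T) is divisible by 5. -/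
open PowerSeries

/-- The coefficientwise-convergent infinite product `∏_{k=1}^∞ (1 - q^{m·k})` in `ℤ[[q]]`:
its `n`-th coefficient agrees with that of any sufficiently long finite partial product
(all factors with `m·(k+1) > n` leave the coefficient of `qⁿ` unchanged), so it may be
defined coefficientwise via the stabilized partial products. -/
noncomputable def etaProd (m : ℕ) : PowerSeries ℤ :=
  PowerSeries.mk fun n =>
    PowerSeries.coeff n (∏ k ∈ Finset.range (n + 1), (1 - (X : PowerSeries ℤ) ^ (m * (k + 1))))

/-- `T = q · ∏(1 - q^{25n}) / ∏(1 - qⁿ) = 1/t₂₅`, as a formal power series over `ℤ`;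
the inverse of `∏(1 - qⁿ)` exists since its constant term is the unit `1`, and is given
by `PowerSeries.invOfUnit _ 1`. -/
noncomputable def Tps : PowerSeries ℤ :=
  (X : PowerSeries ℤ) * etaProd 25 * (etaProd 1).invOfUnit 1

/-- The operator `V : Σ aₙ qⁿ ↦ Σ aₙ q^{5n}`, i.e. substitution `q ↦ q⁵`. -/
noncomputable def Vps (f : PowerSeries ℤ) : PowerSeries ℤ :=
  PowerSeries.mk fun n => if 5 ∣ n then PowerSeries.coeff (n / 5) f else 0

/-- Over `ZMod 5`, the `n`-th coefficient of `f^5` is the `n/5`-th coefficient of `f`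
when `5 ∣ n`, and `0` otherwise (the Frobenius endomorphism). -/
lemma coeff_pow_five_zmod (f : PowerSeries (ZMod 5)) (n : ℕ) :
    PowerSeries.coeff n (f ^ 5) =
      if 5 ∣ n then PowerSeries.coeff (n / 5) f else 0 := by
  haveI : Fact (Nat.Prime 5) := ⟨by norm_num⟩
  have h1 : PowerSeries.coeff n (f ^ 5) =
      ((f.trunc (n + 1)) ^ 5 : Polynomial (ZMod 5)).coeff n := by
    rw [← PowerSeries.coeff_coe_trunc_of_lt n.lt_succ_self, ← PowerSeries.trunc_trunc_pow,
      PowerSeries.coeff_coe_trunc_of_lt n.lt_succ_self, ← Polynomial.coe_pow,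
      Polynomial.coeff_coe]
  have h2 : (f.trunc (n + 1)) ^ 5 =
      Polynomial.expand (ZMod 5) 5 (f.trunc (n + 1)) := by
    rw [← Polynomial.map_frobenius_expand (p := 5) (f := f.trunc (n + 1)), ZMod.frobenius_zmod,
      Polynomial.map_id]
  rw [h1, h2, Polynomial.coeff_expand (by norm_num : 0 < 5)]
  split_ifs with h
  · rw [PowerSeries.coeff_trunc]
    have : n / 5 < n + 1 := Nat.lt_succ_of_le (Nat.div_le_self n 5)
    simp [this]
  · rfl

/-- `T⁵ ≡ V(T) (mod 5)`: every coefficient of `T⁵ - V(T)` is divisible by 5. -/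
theorem T_pow_five_congr_V_T (n : ℕ) :
    (5 : ℤ) ∣ PowerSeries.coeff n (Tps ^ 5 - Vps Tps) := by
  suffices h : ((PowerSeries.coeff n (Tps ^ 5 - Vps Tps) : ℤ) : ZMod 5) = 0 by
    exact_mod_cast (ZMod.intCast_zmod_eq_zero_iff_dvd _ 5).mp h
  set ρ : ℤ →+* ZMod 5 := Int.castRingHom (ZMod 5)
  have key : ((PowerSeries.coeff n (Tps ^ 5 - Vps Tps) : ℤ) : ZMod 5)
      = PowerSeries.coeff n ((PowerSeries.map ρ Tps) ^ 5)
        - PowerSeries.coeff n (PowerSeries.map ρ (Vps Tps)) := by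
    simp only [← map_pow, ← map_sub, PowerSeries.coeff_map]
    rfl
  rw [key, coeff_pow_five_zmod]
  simp only [Vps, PowerSeries.coeff_map, PowerSeries.coeff_mk, apply_ite ρ, map_zero]
  split_ifs <;> simp [PowerSeries.coeff_map]
end

section
/- Let T ∈ ℤ[[q]] be the formal power series T := q · ∏_{n=1}^{∞}(1 − q^{25n}) · (∏_{n=1}^{∞}(1 − qⁿ))^{−1}, and let U₅ : ℤ[[q]] → ℤ[[q]] be the linear operator defined on coefficients by U₅(Σ aₙ qⁿ) = Σ a_{5n} qⁿ. Then U₅(T⁵) ≡ T (mod 5), i.e. every coefficient of U₅(T⁵) − T is divisible by 5. -/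
open PowerSeries

/-- The Atkin operator `U₅ : Σ aₙ qⁿ ↦ Σ a_{5n} qⁿ` on formal power series. -/
noncomputable def U5 (f : PowerSeries ℤ) : PowerSeries ℤ :=
  PowerSeries.mk fun n => PowerSeries.coeff (5 * n) f

/-- The `k`-th coefficient of `f ^ 5` only depends on the truncation of `f` in degrees `≤ k`. -/
lemma coeff_pow_five_trunc {R : Type*} [CommRing R] (f : PowerSeries R) (k : ℕ) :
    PowerSeries.coeff k (f ^ 5) =
      PowerSeries.coeff k (((PowerSeries.trunc (k + 1) f : Polynomial R) :
        PowerSeries R) ^ 5) := by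
  set t : PowerSeries R := ((PowerSeries.trunc (k + 1) f : Polynomial R) : PowerSeries R)
  have hdvd : (X : PowerSeries R) ^ (k + 1) ∣ f - t := by
    rw [PowerSeries.X_pow_dvd_iff]
    intro m hm
    simp [t, Polynomial.coeff_coe, PowerSeries.coeff_trunc, hm]
  have h2 : (X : PowerSeries R) ^ (k + 1) ∣ f ^ 5 - t ^ 5 :=
    dvd_trans hdvd (sub_dvd_pow_sub_pow f t 5)
  rw [PowerSeries.X_pow_dvd_iff] at h2
  have := h2 k (Nat.lt_succ_self k)
  rw [map_sub, sub_eq_zero] at this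
  exact this

/-- Frobenius for power series over `ZMod 5`: coefficient `5n` of `f ^ 5` is coefficient
`n` of `f`. -/
lemma coeff_pow_five (f : PowerSeries (ZMod 5)) (n : ℕ) :
    PowerSeries.coeff (5 * n) (f ^ 5) = PowerSeries.coeff n f := by
  set t : Polynomial (ZMod 5) := PowerSeries.trunc (5 * n + 1) f with ht
  rw [coeff_pow_five_trunc f (5 * n), ← Polynomial.coe_pow, Polynomial.coeff_coe]
  haveI : Fact (Nat.Prime 5) := ⟨by norm_num⟩
  haveI : ExpChar (ZMod 5) 5 := ExpChar.prime (by norm_num)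
  have hexp : t ^ 5 = Polynomial.expand (ZMod 5) 5 t := by
    have h := Polynomial.map_frobenius_expand 5 t
    rwa [ZMod.frobenius_zmod, Polynomial.map_id, eq_comm] at h
  rw [hexp, Polynomial.coeff_expand (by norm_num : 0 < 5)]
  rw [if_pos (dvd_mul_right 5 n), Nat.mul_div_cancel_left n (by norm_num)]
  rw [ht, PowerSeries.coeff_trunc,
    if_pos (Nat.lt_succ_of_le (Nat.le_mul_of_pos_left n (by norm_num)))]

/-- `U₅(T⁵) ≡ T (mod 5)`: every coefficient of `U₅(T⁵) - T` is divisible by 5. -/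
theorem U5_T_pow_five_congr_T (n : ℕ) :
    (5 : ℤ) ∣ PowerSeries.coeff n (U5 (Tps ^ 5) - Tps) := by
  rw [map_sub]
  simp only [U5, coeff_mk]
  have key := coeff_pow_five (PowerSeries.map (Int.castRingHom (ZMod 5)) Tps) n
  rw [← map_pow, PowerSeries.coeff_map, PowerSeries.coeff_map] at key
  have h0 : ((PowerSeries.coeff (5 * n) (Tps ^ 5) - PowerSeries.coeff n Tps : ℤ) :
      ZMod 5) = 0 := by
    push_cast
    rw [sub_eq_zero]
    exact_mod_cast key
  exact_mod_cast (ZMod.intCast_zmod_eq_zero_iff_dvd _ 5).mp h0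
end
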